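/- Let K ⊆ E be a compact convex set containing at least two points, with 0 in the interior of K, and let K° := {u ∈ E : ⟨u,y⟩ ≤ 1 for all y ∈ K} be its polar body. Then the map F ↦ pos(F) is a bijection from the set of faces of K° onto the set of touching cones of K, and for all faces F, G of K° one has F ⊆ G if and only if pos(F) ⊆ pos(G); that is, pos defines an isotone lattice isomorphism from the face lattice of K° onto the touching cone lattice of K. -/

import Mathlib

open scoped Pointwise RealInnerProductSpace

variable {E : Type*} [NormedAddCommGroup E] [InnerProductSpace ℝ E] [FiniteDimensional ℝ E]

/-- `F` is a face of the convex set `C`: a convex subset of `C` such that whenever an open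
segment between two points of `C` meets `F`, both endpoints belong to `F`. -/
def IsFace (C F : Set E) : Prop :=
  Convex ℝ F ∧ F ⊆ C ∧
    ∀ x ∈ C, ∀ y ∈ C, (openSegment ℝ x y ∩ F).Nonempty → x ∈ F ∧ y ∈ F

/-- The exposed face `F⊥(C,u)` of `C` by the vector `u`: the points of `C` where `⟨u,·⟩`
attains its supremum over `C`. -/
def expFace (C : Set E) (u : E) : Set E :=
  {x ∈ C | ∀ y ∈ C, ⟪u, y⟫ ≤ ⟪u, x⟫}

/-- `F` is an exposed face of `C`: either `∅`, or `C`, or `F⊥(C,u)` for some nonzero `u`. -/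
def IsExpFace (C F : Set E) : Prop :=
  F = ∅ ∨ F = C ∨ ∃ u : E, u ≠ 0 ∧ F = expFace C u

/-- The normal cone `N(C,x)` of `C` at the point `x`. -/
def normalCone (C : Set E) (x : E) : Set E :=
  {u | ∀ y ∈ C, ⟪u, y - x⟫ ≤ 0}

/-- The normal cone `N(C,F)` of `C` at a subset `F`; for a nonempty convex `F ⊆ C` it agrees
with `normalCone C x` for any `x` in the relative interior of `F` (all these coincide), and
for `F = ∅` it is all of `E`. -/
def normalConeOf (C F : Set E) : Set E :=
  ⋂ x ∈ intrinsicInterior ℝ F, normalCone C x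

/-- `N` is a normal cone of `C`: the normal cone of some face of `C`. -/
def IsNormalCone (C N : Set E) : Prop :=
  ∃ F, IsFace C F ∧ N = normalConeOf C F

/-- `T` is a touching cone of `C`: a nonempty face of a normal cone of `C`. -/
def IsTouchingCone (C T : Set E) : Prop :=
  T.Nonempty ∧ ∃ N, IsNormalCone C N ∧ IsFace N T

/-- The positive hull of a set: all finite nonnegative combinations (`posHull ∅ = {0}`). -/
def posHull (S : Set E) : Set E :=
  {x | ∃ (k : ℕ) (c : Fin k → ℝ) (s : Fin k → E),
    (∀ i, 0 ≤ c i) ∧ (∀ i, s i ∈ S) ∧ x = ∑ i, c i • s i}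

/-- A vector `u` is sharp normal for `C` if every `x ∈ ri(F⊥(C,u))` satisfies
`u ∈ ri(N(C,x))`. -/
def SharpNormal (C : Set E) (u : E) : Prop :=
  ∀ x ∈ intrinsicInterior ℝ (expFace C u), u ∈ intrinsicInterior ℝ (normalCone C x)

/-- A point `x` is sharp exposed in `C` if every nonzero `u ∈ ri(N(C,x))` satisfies
`x ∈ ri(F⊥(C,u))`. -/
def SharpExposed (C : Set E) (x : E) : Prop :=
  ∀ u ∈ intrinsicInterior ℝ (normalCone C x), u ≠ 0 → x ∈ intrinsicInterior ℝ (expFace C u)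

/-- The smallest exposed face of `C` containing `F`: the intersection of all exposed faces
of `C` containing `F`. -/
def supExp (C F : Set E) : Set E :=
  ⋂₀ {G | IsExpFace C G ∧ F ⊆ G}

/-- The polar body of `K`. -/
def polarBody (K : Set E) : Set E := {u | ∀ y ∈ K, ⟪u, y⟫ ≤ 1}

/-! `K°` contains `0` in its interior, so its proper faces lie in its boundary, where
`sup_K ⟪u, ·⟫ = 1`. For `x ∈ K` the normal cone `N(K, x)` is the cone over the conjugate face
`x̂ = {u ∈ K° | ⟪x, u⟫ = 1}`, a base lying in an affine hyperplane that misses `0`; over such a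
base, `pos` matches the faces of the base with the nonempty faces of the cone. A proper face `F`
of `K°` is contained in `x̂` as soon as `x` lies in the relative interior of the face
`G = {z ∈ K | ⟪u, z⟫ = 1}` exposed by some `u ∈ ri F`, and `N(K, G) = N(K, x)`; so `pos F` is a
face of a normal cone, and every touching cone arises this way. Inclusions are reflected because
a ray from `0` meets the boundary of `K°` at most once. -/

open Filter Topology

section

omit [FiniteDimensional ℝ E]

lemma posHull_eq_hull (S : Set E) : posHull S = PointedCone.hull ℝ S := by
  ext z
  simp only [posHull, SetLike.mem_coe, Set.mem_ofPred_eq, Submodule.mem_span_set']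
  constructor
  · rintro ⟨k, c, s, hc, hs, rfl⟩
    exact ⟨k, fun i => ⟨c i, hc i⟩, fun i => ⟨s i, hs i⟩, by simp⟩
  · rintro ⟨k, c, s, rfl⟩
    exact ⟨k, fun i => c i, fun i => s i, fun i => (c i).2, fun i => (s i).2, by simp⟩

lemma subset_posHull (S : Set E) : S ⊆ posHull S := by
  rw [posHull_eq_hull]; exact PointedCone.subset_hull

lemma zero_mem_posHull (S : Set E) : (0 : E) ∈ posHull S := by
  rw [posHull_eq_hull]; exact zero_mem _

lemma smul_mem_posHull {S : Set E} {t : ℝ} {z : E} (ht : 0 ≤ t) (hz : z ∈ posHull S) :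
    t • z ∈ posHull S := by
  rw [posHull_eq_hull] at hz ⊢; exact PointedCone.smul_mem _ ht hz

lemma posHull_mono {S T : Set E} (h : S ⊆ T) : posHull S ⊆ posHull T := by
  rw [posHull_eq_hull, posHull_eq_hull]; exact Submodule.span_mono h

lemma convex_posHull (S : Set E) : Convex ℝ (posHull S) := by
  rw [posHull_eq_hull]; exact PointedCone.convex _

lemma mem_posHull_iff {G : Set E} (hG : Convex ℝ G) {z : E} :
    z ∈ posHull G ↔ z = 0 ∨ ∃ t : ℝ, 0 < t ∧ ∃ g ∈ G, z = t • g := by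
  refine ⟨?_, ?_⟩
  · rintro ⟨k, c, s, hc, hs, rfl⟩
    set T := ∑ i, c i
    rcases (Finset.sum_nonneg fun i _ => hc i : 0 ≤ T).eq_or_lt with hT | hT
    · left
      have hc0 := (Finset.sum_eq_zero_iff_of_nonneg fun i _ => hc i).1 hT.symm
      exact Finset.sum_eq_zero fun i hi => by rw [hc0 i hi, zero_smul]
    · refine Or.inr ⟨T, hT, ∑ i, (c i / T) • s i, ?_, ?_⟩
      · exact hG.sum_mem (fun i _ => div_nonneg (hc i) hT.le)
          (by rw [← Finset.sum_div, div_self hT.ne']) fun i _ => hs i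
      · simp only [T, Finset.smul_sum, smul_smul, mul_div_cancel₀ _ hT.ne']
  · rintro (rfl | ⟨t, ht, g, hg, rfl⟩)
    · exact zero_mem_posHull G
    · exact smul_mem_posHull ht.le (subset_posHull G hg)

lemma exists_pos_smul_mem_of_zero_mem_interior {S : Set E} (hS : (0 : E) ∈ interior S)
    (w : E) : ∃ t : ℝ, 0 < t ∧ t • w ∈ S := by
  have hlim : Tendsto (fun t : ℝ => t • w) (𝓝[>] 0) (𝓝 0) := by
    simpa using ((tendsto_id (x := 𝓝 (0 : ℝ))).smul_const w).mono_left nhdsWithin_le_nhds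
  obtain ⟨t, htS, ht⟩ :=
    ((hlim.eventually (mem_interior_iff_mem_nhds.1 hS)).and self_mem_nhdsWithin).exists
  exact ⟨t, ht, htS⟩

lemma posHull_eq_univ_of_zero_mem_interior {S : Set E} (hS : (0 : E) ∈ interior S) :
    posHull S = Set.univ := by
  refine Set.eq_univ_of_forall fun w => ?_
  obtain ⟨t, ht, htw⟩ := exists_pos_smul_mem_of_zero_mem_interior hS w
  simpa [ht.ne'] using smul_mem_posHull (inv_nonneg.2 ht.le) (subset_posHull S htw)

lemma isFace_iff_isExtreme {C F : Set E} : IsFace C F ↔ Convex ℝ F ∧ IsExtreme ℝ C F := by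
  refine ⟨fun ⟨hF, hFC, h⟩ => ⟨hF, hFC, fun x hx y hy z hz hxy => (h x hx y hy ⟨z, hxy, hz⟩).1⟩,
    fun ⟨hF, hext⟩ => ⟨hF, hext.subset, fun x hx y hy ⟨z, hxy, hz⟩ =>
      ⟨hext.left_mem_of_mem_openSegment hx hy hz hxy,
        hext.right_mem_of_mem_openSegment hx hy hz hxy⟩⟩⟩

lemma Convex.isFace_self {C : Set E} (hC : Convex ℝ C) : IsFace C C :=
  isFace_iff_isExtreme.2 ⟨hC, .rfl⟩

lemma isFace_empty (C : Set E) : IsFace C ∅ :=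
  ⟨convex_empty, Set.empty_subset C, fun _ _ _ _ h => by simp at h⟩

lemma IsFace.trans {C G F : Set E} (hG : IsFace C G) (hF : IsFace G F) : IsFace C F :=
  isFace_iff_isExtreme.2
    ⟨hF.1, (isFace_iff_isExtreme.1 hG).2.trans (isFace_iff_isExtreme.1 hF).2⟩

lemma IsFace.mono {C G F : Set E} (hF : IsFace C F) (hGC : G ⊆ C) (hFG : F ⊆ G) :
    IsFace G F :=
  isFace_iff_isExtreme.2 ⟨hF.1, (isFace_iff_isExtreme.1 hF).2.mono hGC hFG⟩

lemma IsFace.inter_of_subset {C T G : Set E} (hT : IsFace C T) (hG : Convex ℝ G)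
    (hGC : G ⊆ C) : IsFace G (T ∩ G) :=
  ⟨hT.1.inter hG, Set.inter_subset_right, fun x hx y hy hxy =>
    have h := hT.2.2 x (hGC hx) y (hGC hy)
      (hxy.mono (Set.inter_subset_inter_right _ Set.inter_subset_left))
    ⟨⟨h.1, hx⟩, ⟨h.2, hy⟩⟩⟩

lemma mem_openSegment_add_smul_sub (p u : E) {s : ℝ} (hs : 0 < s) :
    u ∈ openSegment ℝ p (u + s • (u - p)) :=
  ⟨s / (1 + s), 1 / (1 + s), by positivity, by positivity, by field_simp; ring, by
    match_scalars <;> field_simp; ring⟩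

lemma self_mem_openSegment_smul_smul (w : E) {a b : ℝ} (ha : a < 1) (hb : 1 < b) :
    w ∈ openSegment ℝ (a • w) (b • w) := by
  have hab : b - a ≠ 0 := by linarith
  refine ⟨(b - 1) / (b - a), (1 - a) / (b - a), div_pos (by linarith) (by linarith),
    div_pos (by linarith) (by linarith), by field_simp; ring, ?_⟩
  match_scalars
  field_simp
  ring

lemma exists_add_smul_sub_mem_of_mem_intrinsicInterior {S : Set E} {p q : E}
    (hp : p ∈ intrinsicInterior ℝ S) (hq : q ∈ S) :
    ∃ s : ℝ, 0 < s ∧ p + s • (p - q) ∈ S := by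
  obtain ⟨z, hz, rfl⟩ := mem_intrinsicInterior.1 hp
  have hline : ∀ s : ℝ, (z : E) + s • (z - q) ∈ affineSpan ℝ S := fun s => by
    convert AffineMap.lineMap_mem (1 + s) (subset_affineSpan ℝ S hq) z.2 using 1
    rw [AffineMap.lineMap_apply_module]
    module
  let γ : ℝ → affineSpan ℝ S := fun s => ⟨z + s • (z - q), hline s⟩
  have hγ : Continuous γ := by fun_prop
  have hγ0 : γ 0 = z := by ext; simp [γ]
  have hev : ∀ᶠ s in 𝓝[>] 0, γ s ∈ interior ((↑) ⁻¹' S) :=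
    (hγ.tendsto' 0 z hγ0).mono_left nhdsWithin_le_nhds |>.eventually
      (isOpen_interior.mem_nhds hz)
  obtain ⟨s, hsS, hs⟩ := (hev.and self_mem_nhdsWithin).exists
  exact ⟨s, hs, (interior_subset hsS : γ s ∈ (↑) ⁻¹' S)⟩

lemma inner_eq_of_forall_le_of_mem_intrinsicInterior {S : Set E} {a u v : E}
    (hle : ∀ w ∈ S, ⟪a, w⟫ ≤ ⟪a, u⟫) (hu : u ∈ intrinsicInterior ℝ S) (hv : v ∈ S) :
    ⟪a, v⟫ = ⟪a, u⟫ := by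
  obtain ⟨s, hs, hw⟩ := exists_add_smul_sub_mem_of_mem_intrinsicInterior hu hv
  have := hle _ hw
  rw [inner_add_right, inner_smul_right, inner_sub_right] at this
  nlinarith [hle v hv]

lemma IsFace.eq_of_mem_intrinsicInterior {C F : Set E} (hF : IsFace C F) {u : E}
    (huF : u ∈ F) (huC : u ∈ intrinsicInterior ℝ C) : F = C := by
  refine hF.2.1.antisymm fun p hp => ?_
  obtain ⟨s, hs, hq⟩ := exists_add_smul_sub_mem_of_mem_intrinsicInterior huC hp
  exact (hF.2.2 p hp _ hq ⟨u, mem_openSegment_add_smul_sub p u hs, huF⟩).1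

lemma IsFace.notMem_interior {C F : Set E} (hF : IsFace C F) (hFC : F ≠ C) {u : E}
    (hu : u ∈ F) : u ∉ interior C := fun h =>
  hFC (hF.eq_of_mem_intrinsicInterior hu (interior_subset_intrinsicInterior h))

lemma isFace_setOf_inner_eq {C : Set E} (hC : Convex ℝ C) {a : E} {c : ℝ}
    (hle : ∀ z ∈ C, ⟪a, z⟫ ≤ c) : IsFace C {z ∈ C | ⟪a, z⟫ = c} := by
  refine ⟨hC.inter (convex_hyperplane (innerₛₗ ℝ a).isLinear c), fun z hz => hz.1, ?_⟩
  rintro x hx y hy ⟨z, ⟨p, q, hp, hq, hpq, rfl⟩, -, hz⟩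
  obtain rfl : q = 1 - p := by linarith
  rw [inner_add_right, inner_smul_right, inner_smul_right] at hz
  have hx' := hle x hx
  have hy' := hle y hy
  exact ⟨⟨hx, by nlinarith⟩, ⟨hy, by nlinarith⟩⟩

lemma IsFace.smul_mem {C T : Set E} (hC : ∀ z ∈ C, ∀ t : ℝ, 0 ≤ t → t • z ∈ C)
    (hT : IsFace C T) {w : E} (hw : w ∈ T) {t : ℝ} (ht : 0 ≤ t) : t • w ∈ T := by
  have hwC := hT.2.1 hw
  rcases lt_trichotomy t 1 with h | rfl | h
  · exact (hT.2.2 _ (hC w hwC t ht) _ (hC w hwC 2 zero_le_two)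
      ⟨w, self_mem_openSegment_smul_smul w h one_lt_two, hw⟩).1
  · rwa [one_smul]
  · exact (hT.2.2 _ (hC w hwC 0 le_rfl) _ (hC w hwC t ht)
      ⟨w, self_mem_openSegment_smul_smul w zero_lt_one h, hw⟩).2

lemma IsFace.eq_posHull_inter {G T : Set E} (hG : Convex ℝ G) (hT : IsFace (posHull G) T)
    (hTne : T.Nonempty) : T = posHull (T ∩ G) := by
  have hsmul : ∀ w ∈ T, ∀ t : ℝ, 0 ≤ t → t • w ∈ T := fun w hw t ht =>
    hT.smul_mem (fun z hz s hs => smul_mem_posHull hs hz) hw ht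
  refine Set.Subset.antisymm (fun w hw => ?_) (fun w hw => ?_)
  · rcases (mem_posHull_iff hG).1 (hT.2.1 hw) with rfl | ⟨t, ht, g, hg, rfl⟩
    · exact zero_mem_posHull _
    · have hgT : g ∈ T := by simpa [ht.ne'] using hsmul _ hw t⁻¹ (inv_nonneg.2 ht.le)
      exact smul_mem_posHull ht.le (subset_posHull _ ⟨hgT, hg⟩)
  · rcases (mem_posHull_iff (hT.1.inter hG)).1 hw with rfl | ⟨t, ht, f, hf, rfl⟩
    · obtain ⟨w, hw⟩ := hTne
      simpa using hsmul w hw 0 le_rfl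
    · exact hsmul f hf.1 t ht.le

lemma mem_posHull_of_add_mem_posHull {G F : Set E} {a : E} (hG : Convex ℝ G)
    (hGa : ∀ g ∈ G, ⟪a, g⟫ = 1) (hF : IsFace G F) {b c : E} (hb : b ∈ posHull G)
    (hc : c ∈ posHull G) (hbc : b + c ∈ posHull F) : b ∈ posHull F := by
  rcases (mem_posHull_iff hG).1 hb with rfl | ⟨s, hs, g₁, hg₁, rfl⟩
  · exact zero_mem_posHull F
  rcases (mem_posHull_iff hG).1 hc with rfl | ⟨t, ht, g₂, hg₂, rfl⟩
  · simpa using hbc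
  -- `⟪a, ·⟫` reads off the scale of a point of the cone
  have hscale : ∀ {τ : ℝ} {f : E}, f ∈ G → s • g₁ + t • g₂ = τ • f → τ = s + t := by
    intro τ f hf h
    simpa [inner_add_right, inner_smul_right, hGa _ hf, hGa _ hg₁, hGa _ hg₂] using
      (congrArg (⟪a, ·⟫) h).symm
  rcases (mem_posHull_iff hF.1).1 hbc with h0 | ⟨τ, -, f, hf, hτf⟩
  · have := hscale hg₁ (h0.trans (zero_smul ℝ g₁).symm)
    linarith
  obtain rfl := hscale (hF.2.1 hf) hτf
  have hseg : f ∈ openSegment ℝ g₁ g₂ := by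
    refine ⟨s / (s + t), t / (s + t), by positivity, by positivity, by field_simp, ?_⟩
    rw [div_eq_inv_mul, div_eq_inv_mul, mul_smul, mul_smul, ← smul_add, hτf,
      inv_smul_smul₀ (by positivity)]
  exact smul_mem_posHull hs.le (subset_posHull F (hF.2.2 g₁ hg₁ g₂ hg₂ ⟨f, hseg, hf⟩).1)

lemma IsFace.isFace_posHull {G F : Set E} {a : E} (hG : Convex ℝ G)
    (hGa : ∀ g ∈ G, ⟪a, g⟫ = 1) (hF : IsFace G F) : IsFace (posHull G) (posHull F) := by
  refine ⟨convex_posHull F, posHull_mono hF.2.1, ?_⟩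
  rintro b hb c hc ⟨w, ⟨p, q, hp, hq, -, rfl⟩, hw⟩
  have hpb := smul_mem_posHull hp.le hb
  have hqc := smul_mem_posHull hq.le hc
  constructor
  · simpa [hp.ne'] using smul_mem_posHull (inv_nonneg.2 hp.le)
      (mem_posHull_of_add_mem_posHull hG hGa hF hpb hqc hw)
  · simpa [hq.ne'] using smul_mem_posHull (inv_nonneg.2 hq.le)
      (mem_posHull_of_add_mem_posHull hG hGa hF hqc hpb (add_comm (p • b) _ ▸ hw))

lemma normalConeOf_eq_normalCone {K G : Set E} (hGK : G ⊆ K) {x : E}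
    (hx : x ∈ intrinsicInterior ℝ G) : normalConeOf K G = normalCone K x := by
  refine (Set.biInter_subset_of_mem hx).antisymm fun u hu =>
    Set.mem_biInter fun x' hx' y hy => ?_
  have hmax : ∀ w ∈ G, ⟪u, w⟫ ≤ ⟪u, x⟫ := fun w hw => by
    simpa [inner_sub_right] using hu w (hGK hw)
  have := hu y hy
  rw [inner_sub_right] at this ⊢
  linarith [inner_eq_of_forall_le_of_mem_intrinsicInterior hmax hx (intrinsicInterior_subset hx')]

lemma normalConeOf_empty (K : Set E) : normalConeOf K ∅ = Set.univ := by
  simp [normalConeOf]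

lemma normalCone_ne_univ {K : Set E} {x y : E} (hx : x ∈ K) (hy : y ∈ K) (hxy : x ≠ y)
    (z : E) : normalCone K z ≠ Set.univ := by
  intro h
  have key : ∀ w ∈ K, w = z := fun w hw => by
    have := (h ▸ Set.mem_univ (w - z) : w - z ∈ normalCone K z) w hw
    rwa [real_inner_self_nonpos, sub_eq_zero] at this
  exact hxy ((key x hx).trans (key y hy).symm)

lemma convex_polarBody (K : Set E) : Convex ℝ (polarBody K) := by
  intro u hu v hv p q hp hq hpq y hy
  rw [inner_add_left, real_inner_smul_left, real_inner_smul_left]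
  nlinarith [hu y hy, hv y hy]

lemma mem_interior_polarBody_of_forall_inner_lt {K : Set E} (hK : IsCompact K) {u : E}
    (hu : ∀ y ∈ K, ⟪u, y⟫ < 1) : u ∈ interior (polarBody K) := by
  refine mem_interior_iff_mem_nhds.2 ?_
  filter_upwards [hK.eventually_forall_of_forall_eventually (P := fun w y => ⟪w, y⟫ < 1)
    fun y hy => (continuous_inner.tendsto (u, y)).eventually (gt_mem_nhds (hu y hy))]
    with w hw y hy
  exact (hw y hy).le

lemma posHull_polarBody {K : Set E} (hK : IsCompact K) : posHull (polarBody K) = Set.univ :=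
  posHull_eq_univ_of_zero_mem_interior (mem_interior_polarBody_of_forall_inner_lt hK (by simp))

lemma exists_inner_eq_one_of_notMem_interior {K : Set E} (hK : IsCompact K) {u : E}
    (hu : u ∈ polarBody K) (hu' : u ∉ interior (polarBody K)) : ∃ y ∈ K, ⟪u, y⟫ = 1 := by
  by_contra! h
  exact hu' (mem_interior_polarBody_of_forall_inner_lt hK fun y hy => (hu y hy).lt_of_ne (h y hy))

lemma eq_one_of_smul_notMem_interior_polarBody {K : Set E} (hK : IsCompact K) {g : E} {t : ℝ}
    (ht : 0 < t) (hg : g ∈ polarBody K) (hg' : g ∉ interior (polarBody K))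
    (htg : t • g ∈ polarBody K) (htg' : t • g ∉ interior (polarBody K)) : t = 1 := by
  obtain ⟨y₁, hy₁, h₁⟩ := exists_inner_eq_one_of_notMem_interior hK hg hg'
  obtain ⟨y₂, hy₂, h₂⟩ := exists_inner_eq_one_of_notMem_interior hK htg htg'
  have hle₁ := htg y₁ hy₁
  have hle₂ := hg y₂ hy₂
  rw [real_inner_smul_left] at hle₁ h₂
  nlinarith

def conjugateFace (K : Set E) (x : E) : Set E :=
  {u ∈ polarBody K | ⟪x, u⟫ = 1}

lemma isFace_conjugateFace {K : Set E} {x : E} (hx : x ∈ K) :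
    IsFace (polarBody K) (conjugateFace K x) :=
  isFace_setOf_inner_eq (convex_polarBody K) fun u hu => by
    rw [real_inner_comm]; exact hu x hx

lemma normalCone_eq_posHull_conjugateFace {K : Set E} (h0 : (0 : E) ∈ interior K) {x : E}
    (hx : x ∈ K) : normalCone K x = posHull (conjugateFace K x) := by
  ext u
  rw [mem_posHull_iff (isFace_conjugateFace hx).1]
  constructor
  · intro hu
    rcases eq_or_ne u 0 with rfl | hu0
    · exact Or.inl rfl
    obtain ⟨ε, hε, hεu⟩ := exists_pos_smul_mem_of_zero_mem_interior h0 u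
    have hpos : 0 < ⟪u, x⟫ := by
      have := hu _ hεu
      rw [inner_sub_right, real_inner_smul_right, real_inner_self_eq_norm_sq] at this
      nlinarith [mul_pos hε (pow_pos (norm_pos_iff.2 hu0) 2)]
    refine Or.inr ⟨⟪u, x⟫, hpos, ⟪u, x⟫⁻¹ • u, ⟨fun y hy => ?_, ?_⟩,
      (smul_inv_smul₀ hpos.ne' u).symm⟩
    · have := hu y hy
      rw [inner_sub_right] at this
      rw [real_inner_smul_left, inv_mul_le_one₀ hpos]
      linarith
    · rw [real_inner_smul_right, real_inner_comm u x, inv_mul_cancel₀ hpos.ne']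
  · rintro (rfl | ⟨t, ht, v, ⟨hv, hvx⟩, rfl⟩) y hy
    · simp
    · rw [real_inner_smul_left, inner_sub_right, real_inner_comm x v, hvx]
      nlinarith [hv y hy]

end

lemma exists_isFace_subset_conjugateFace {K F : Set E} (hK : Convex ℝ K) (hKc : IsCompact K)
    (hKne : K.Nonempty) (hF : IsFace (polarBody K) F) (hFP : F ≠ polarBody K) :
    ∃ G, IsFace K G ∧ ∃ x ∈ intrinsicInterior ℝ G, F ⊆ conjugateFace K x := by
  rcases F.eq_empty_or_nonempty with rfl | hFne
  · obtain ⟨x, hx⟩ := hKne.intrinsicInterior hK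
    exact ⟨K, hK.isFace_self, x, hx, Set.empty_subset _⟩
  obtain ⟨u, hu⟩ := hFne.intrinsicInterior hF.1
  have huF := intrinsicInterior_subset hu
  obtain ⟨x₁, hx₁, hux₁⟩ :=
    exists_inner_eq_one_of_notMem_interior hKc (hF.2.1 huF) (hF.notMem_interior hFP huF)
  have hG : IsFace K {z ∈ K | ⟪u, z⟫ = 1} := isFace_setOf_inner_eq hK (hF.2.1 huF)
  obtain ⟨x, hx⟩ := Set.Nonempty.intrinsicInterior hG.1 ⟨x₁, hx₁, hux₁⟩
  obtain ⟨hxK, hux⟩ := intrinsicInterior_subset hx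
  have hxu : ⟪x, u⟫ = 1 := by rw [real_inner_comm, hux]
  have hmax : ∀ w ∈ F, ⟪x, w⟫ ≤ ⟪x, u⟫ := fun w hw => by
    rw [hxu, real_inner_comm]; exact hF.2.1 hw x hxK
  refine ⟨_, hG, x, hx, fun v hv => ⟨hF.2.1 hv, ?_⟩⟩
  rw [inner_eq_of_forall_le_of_mem_intrinsicInterior hmax hu hv, hxu]

theorem isTouchingCone_posHull {K F : Set E} (hK : Convex ℝ K) (hKc : IsCompact K)
    (h0 : (0 : E) ∈ interior K) (hF : IsFace (polarBody K) F) :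
    IsTouchingCone K (posHull F) := by
  refine ⟨⟨0, zero_mem_posHull F⟩, ?_⟩
  by_cases hFP : F = polarBody K
  · rw [hFP, posHull_polarBody hKc]
    exact ⟨_, ⟨∅, isFace_empty K, (normalConeOf_empty K).symm⟩, convex_univ.isFace_self⟩
  obtain ⟨G, hG, x, hx, hFx⟩ :=
    exists_isFace_subset_conjugateFace hK hKc ⟨0, interior_subset h0⟩ hF hFP
  have hxK := hG.2.1 (intrinsicInterior_subset hx)
  have hconj := isFace_conjugateFace hxK
  refine ⟨_, ⟨G, hG, ?_⟩, (hF.mono hconj.2.1 hFx).isFace_posHull hconj.1 fun g hg => hg.2⟩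
  rw [normalConeOf_eq_normalCone hG.2.1 hx, normalCone_eq_posHull_conjugateFace h0 hxK]

theorem exists_isFace_posHull_eq {K T : Set E} (hKc : IsCompact K)
    (h0 : (0 : E) ∈ interior K) (hT : IsTouchingCone K T) :
    ∃ F, IsFace (polarBody K) F ∧ posHull F = T := by
  obtain ⟨hTne, _, ⟨G, hG, rfl⟩, hT⟩ := hT
  rcases G.eq_empty_or_nonempty with rfl | hGne
  · rw [normalConeOf_empty] at hT
    obtain ⟨w, hw⟩ := hTne
    refine ⟨polarBody K, (convex_polarBody K).isFace_self, ?_⟩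
    rw [posHull_polarBody hKc,
      hT.eq_of_mem_intrinsicInterior hw (interior_subset_intrinsicInterior (by simp))]
  obtain ⟨x, hx⟩ := hGne.intrinsicInterior hG.1
  have hxK := hG.2.1 (intrinsicInterior_subset hx)
  have hconj := isFace_conjugateFace hxK
  rw [normalConeOf_eq_normalCone hG.2.1 hx, normalCone_eq_posHull_conjugateFace h0 hxK] at hT
  exact ⟨_, hconj.trans (hT.inter_of_subset hconj.1 (subset_posHull _)),
    (hT.eq_posHull_inter hconj.1 hTne).symm⟩

lemma posHull_ne_univ_of_ne {K G : Set E} (hK : Convex ℝ K) (hKc : IsCompact K)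
    (h0 : (0 : E) ∈ interior K) {x y : E} (hx : x ∈ K) (hy : y ∈ K) (hxy : x ≠ y)
    (hG : IsFace (polarBody K) G) (hGP : G ≠ polarBody K) : posHull G ≠ Set.univ := by
  obtain ⟨G', hG', z, hz, hGz⟩ := exists_isFace_subset_conjugateFace hK hKc ⟨x, hx⟩ hG hGP
  have hsub : posHull G ⊆ normalCone K z := by
    rw [normalCone_eq_posHull_conjugateFace h0 (hG'.2.1 (intrinsicInterior_subset hz))]
    exact posHull_mono hGz
  exact fun h => normalCone_ne_univ hx hy hxy z (Set.univ_subset_iff.1 (h ▸ hsub))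

theorem subset_iff_posHull_subset {K F G : Set E} (hK : Convex ℝ K) (hKc : IsCompact K)
    (h0 : (0 : E) ∈ interior K) {x y : E} (hx : x ∈ K) (hy : y ∈ K) (hxy : x ≠ y)
    (hF : IsFace (polarBody K) F) (hG : IsFace (polarBody K) G) :
    F ⊆ G ↔ posHull F ⊆ posHull G := by
  refine ⟨posHull_mono, fun h => ?_⟩
  by_cases hGP : G = polarBody K
  · exact hGP ▸ hF.2.1
  by_cases hFP : F = polarBody K
  · rw [hFP, posHull_polarBody hKc, Set.univ_subset_iff] at h
    exact absurd h (posHull_ne_univ_of_ne hK hKc h0 hx hy hxy hG hGP)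
  intro v hv
  rcases (mem_posHull_iff hG.1).1 (h (subset_posHull F hv)) with rfl | ⟨t, ht, g, hg, rfl⟩
  · exact absurd (mem_interior_polarBody_of_forall_inner_lt hKc (by simp))
      (hF.notMem_interior hFP hv)
  rw [eq_one_of_smul_notMem_interior_polarBody hKc ht (hG.2.1 hg) (hG.notMem_interior hGP hg)
    (hF.2.1 hv) (hF.notMem_interior hFP hv), one_smul]
  exact hg

/-- For a compact convex set `K` with at least two points and `0` in its
interior, the map `F ↦ pos(F)` is a bijection from the faces of the polar body `K°` onto
the touching cones of `K`, and is an isotone lattice isomorphism: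
`F ⊆ G ↔ pos(F) ⊆ pos(G)`. -/
theorem stmt_18 (K : Set E) (hK : Convex ℝ K) (hKc : IsCompact K)
    (x y : E) (hx : x ∈ K) (hy : y ∈ K) (hxy : x ≠ y) (h0 : 0 ∈ interior K) :
    (∀ F, IsFace (polarBody K) F → IsTouchingCone K (posHull F)) ∧
    (∀ T, IsTouchingCone K T → ∃ F, IsFace (polarBody K) F ∧ posHull F = T) ∧
    (∀ F G, IsFace (polarBody K) F → IsFace (polarBody K) G →
      posHull F = posHull G → F = G) ∧
    (∀ F G, IsFace (polarBody K) F → IsFace (polarBody K) G →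
      (F ⊆ G ↔ posHull F ⊆ posHull G)) := by
  have hiso : ∀ F G, IsFace (polarBody K) F → IsFace (polarBody K) G →
      (F ⊆ G ↔ posHull F ⊆ posHull G) := fun F G hF hG =>
    subset_iff_posHull_subset hK hKc h0 hx hy hxy hF hG
  refine ⟨fun F hF => isTouchingCone_posHull hK hKc h0 hF,
    fun T hT => exists_isFace_posHull_eq hKc h0 hT, fun F G hF hG h => ?_, hiso⟩
  exact ((hiso F G hF hG).2 h.le).antisymm ((hiso G F hG hF).2 h.ge)
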